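/- arXiv:1007.3450 — 2 statements merged into one kernel-verified Lean document; each statement's English description precedes it below -/
import Mathlib

section
/- Define the map φ on parameters (e_0,...,e_{L−1}, κ_0,...,κ_{L−1}, θ) by φ(e_0) = κ_0 − e_0 − 1, φ(e_n) = −e_{L−n} for n ≠ 0, φ(κ_0) = κ_0, φ(κ_n) = −κ_{L−n} for n ≠ 0, and φ(θ) = κ_0 − θ, and on canonical variables (q_n, p_n, s)_{1≤n≤L−1} by φ(q_n) = s p_{L−n}/(q_{L−n} p_{L−n} − κ_{L−n}), φ(p_n) = q_{L−n}(κ_{L−n} − q_{L−n} p_{L−n})/s (indices mod L with the convention q_{L−n} meaning index L−n in 1..L−1). Then φ is an involution: φ² = id on both parameters and variables, wherever the expressions are defined (q_n p_n ≠ κ_n, s ≠ 0). -/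
/-! On each pair of canonical variables `φ` acts by `canonicalFlip s κₙ` composed with the index
reflection `n ↦ L − n`, and it sends `κ_{L−n}` to `−κₙ`. The product `q p` changes sign under the
flip, so the denominator of the second application is `κ − q p` again, and the two applications
cancel. -/

section CanonicalFlip

variable {K : Type*} [Field K]

def canonicalFlip (s κ : K) (x : K × K) : K × K :=
  (s * x.2 / (x.1 * x.2 - κ), x.1 * (κ - x.1 * x.2) / s)

theorem canonicalFlip_fst_mul_snd {s κ q p : K} (hs : s ≠ 0) (hqp : q * p ≠ κ) :
    (canonicalFlip s κ (q, p)).1 * (canonicalFlip s κ (q, p)).2 = -(q * p) := by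
  rw [canonicalFlip, div_mul_div_comm, div_eq_iff (mul_ne_zero (sub_ne_zero.mpr hqp) hs)]
  ring

theorem canonicalFlip_neg_canonicalFlip {s κ : K} {x : K × K} (hs : s ≠ 0)
    (hx : x.1 * x.2 ≠ κ) : canonicalFlip s (-κ) (canonicalFlip s κ x) = x := by
  obtain ⟨q, p⟩ := x
  have hd : κ - q * p ≠ 0 := sub_ne_zero.mpr hx.symm
  rw [canonicalFlip, canonicalFlip_fst_mul_snd hs hx, sub_neg_eq_add, neg_add_eq_sub]
  simp only [canonicalFlip, neg_sub_neg, Prod.mk.injEq]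
  constructor
  · rw [mul_div_cancel₀ _ hs, mul_div_assoc, div_self hd, mul_one]
  · rw [div_mul_cancel₀ _ (sub_ne_zero.mpr hx), mul_div_cancel_left₀ _ hs]

end CanonicalFlip

theorem stmt_17_general (L : ℕ) (s θ : ℂ) (hs : s ≠ 0)
    (e κ q p : ℕ → ℂ)
    (hqp : ∀ n, 1 ≤ n → n ≤ L - 1 → q n * p n ≠ κ n)
    (e' κ' q' p' : ℕ → ℂ) (θ' : ℂ)
    (he'0 : e' 0 = κ 0 - e 0 - 1)
    (he' : ∀ n, 1 ≤ n → n ≤ L - 1 → e' n = -e (L - n))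
    (hκ'0 : κ' 0 = κ 0)
    (hκ' : ∀ n, 1 ≤ n → n ≤ L - 1 → κ' n = -κ (L - n))
    (hθ' : θ' = κ 0 - θ)
    (hq' : ∀ n, 1 ≤ n → n ≤ L - 1 →
      q' n = s * p (L - n) / (q (L - n) * p (L - n) - κ (L - n)))
    (hp' : ∀ n, 1 ≤ n → n ≤ L - 1 →
      p' n = q (L - n) * (κ (L - n) - q (L - n) * p (L - n)) / s)
    (e'' κ'' q'' p'' : ℕ → ℂ) (θ'' : ℂ)
    (he''0 : e'' 0 = κ' 0 - e' 0 - 1)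
    (he'' : ∀ n, 1 ≤ n → n ≤ L - 1 → e'' n = -e' (L - n))
    (hκ''0 : κ'' 0 = κ' 0)
    (hκ'' : ∀ n, 1 ≤ n → n ≤ L - 1 → κ'' n = -κ' (L - n))
    (hθ'' : θ'' = κ' 0 - θ')
    (hq'' : ∀ n, 1 ≤ n → n ≤ L - 1 →
      q'' n = s * p' (L - n) / (q' (L - n) * p' (L - n) - κ' (L - n)))
    (hp'' : ∀ n, 1 ≤ n → n ≤ L - 1 →
      p'' n = q' (L - n) * (κ' (L - n) - q' (L - n) * p' (L - n)) / s) :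
    e'' 0 = e 0 ∧ κ'' 0 = κ 0 ∧ θ'' = θ ∧
      (∀ n, 1 ≤ n → n ≤ L - 1 →
        e'' n = e n ∧ κ'' n = κ n ∧ q'' n = q n ∧ p'' n = p n) := by
  refine ⟨by rw [he''0, hκ'0, he'0]; ring, by rw [hκ''0, hκ'0],
    by rw [hθ'', hκ'0, hθ']; ring, fun n h1 h2 => ?_⟩
  have hm1 : 1 ≤ L - n := by omega
  have hm2 : L - n ≤ L - 1 := by omega
  have hback : L - (L - n) = n := by omega
  have hflip : (q'' n, p'' n) = canonicalFlip s (-κ n) (canonicalFlip s (κ n) (q n, p n)) := by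
    rw [hq'' n h1 h2, hp'' n h1 h2, hq' _ hm1 hm2, hp' _ hm1 hm2, hκ' _ hm1 hm2, hback]
    rfl
  rw [canonicalFlip_neg_canonicalFlip hs (hqp n h1 h2), Prod.mk.injEq] at hflip
  exact ⟨by rw [he'' n h1 h2, he' _ hm1 hm2, hback, neg_neg],
    by rw [hκ'' n h1 h2, hκ' _ hm1 hm2, hback, neg_neg], hflip.1, hflip.2⟩

/-- Remark 8.3: the map `φ` defined on parameters by
`φ(e₀) = κ₀−e₀−1`, `φ(eₙ) = −e_{L−n}` (n ≠ 0), `φ(κ₀) = κ₀`, `φ(κₙ) = −κ_{L−n}` (n ≠ 0),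
`φ(θ) = κ₀−θ`, and on canonical variables (1 ≤ n ≤ L−1) by
`φ(qₙ) = s p_{L−n}/(q_{L−n}p_{L−n} − κ_{L−n})`,
`φ(pₙ) = q_{L−n}(κ_{L−n} − q_{L−n}p_{L−n})/s`, is an involution wherever defined
(`qₙpₙ ≠ κₙ`, `s ≠ 0`): applying `φ` twice returns all parameters and variables. -/
theorem stmt_17 (L : ℕ) (hL : 2 ≤ L) (s θ : ℂ) (hs : s ≠ 0)
    (e κ q p : ℕ → ℂ)
    (hqp : ∀ n, 1 ≤ n → n ≤ L - 1 → q n * p n ≠ κ n)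
    (e' κ' q' p' : ℕ → ℂ) (θ' : ℂ)
    (he'0 : e' 0 = κ 0 - e 0 - 1)
    (he' : ∀ n, 1 ≤ n → n ≤ L - 1 → e' n = -e (L - n))
    (hκ'0 : κ' 0 = κ 0)
    (hκ' : ∀ n, 1 ≤ n → n ≤ L - 1 → κ' n = -κ (L - n))
    (hθ' : θ' = κ 0 - θ)
    (hq' : ∀ n, 1 ≤ n → n ≤ L - 1 →
      q' n = s * p (L - n) / (q (L - n) * p (L - n) - κ (L - n)))
    (hp' : ∀ n, 1 ≤ n → n ≤ L - 1 →
      p' n = q (L - n) * (κ (L - n) - q (L - n) * p (L - n)) / s)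
    (e'' κ'' q'' p'' : ℕ → ℂ) (θ'' : ℂ)
    (he''0 : e'' 0 = κ' 0 - e' 0 - 1)
    (he'' : ∀ n, 1 ≤ n → n ≤ L - 1 → e'' n = -e' (L - n))
    (hκ''0 : κ'' 0 = κ' 0)
    (hκ'' : ∀ n, 1 ≤ n → n ≤ L - 1 → κ'' n = -κ' (L - n))
    (hθ'' : θ'' = κ' 0 - θ')
    (hq'' : ∀ n, 1 ≤ n → n ≤ L - 1 →
      q'' n = s * p' (L - n) / (q' (L - n) * p' (L - n) - κ' (L - n)))
    (hp'' : ∀ n, 1 ≤ n → n ≤ L - 1 →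
      p'' n = q' (L - n) * (κ' (L - n) - q' (L - n) * p' (L - n)) / s) :
    e'' 0 = e 0 ∧ κ'' 0 = κ 0 ∧ θ'' = θ ∧
      (∀ n, 1 ≤ n → n ≤ L - 1 →
        e'' n = e n ∧ κ'' n = κ n ∧ q'' n = q n ∧ p'' n = p n) :=
  stmt_17_general L s θ hs e κ q p hqp e' κ' q' p' θ' he'0 he' hκ'0 hκ' hθ' hq' hp' e'' κ'' q'' p''
    θ'' he''0 he'' hκ''0 hκ'' hθ'' hq'' hp''
end

section
/- Let g^{(i)}: ℤ² → ℂ and f^{(i)}: ℤ² → ℂ∖{0} for i in a finite index set, let t_i be nonzero scalars with (t_i/t_j)^L ≠ 1, and suppose U, V : ℤ² → ℂ satisfy V_{m,n} − U_{m,n} = g_{m,n} and U_{m−1,n}/V_{m,n−1} = (t_j f^{(j)}_{m,n})/(t_i f^{(i)}_{m,n}) together with the periodicities U_{m+L,n} = U_{m,n+L} = U_{m,n} (and same for V, f, g). Then U is uniquely determined and U_{m,n} = (1/((t_i/t_j)^L − 1)) Σ_{b=1}^L g_{m−b+1, n+b−1} Π_{a=1}^{b−1} (t_i f^{(i)}_{m−a+1,n+a})/(t_j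 f^{(j)}_{m−a+1,n+a}). -/
/-!
Eliminating `V` turns the two equations into a first-order affine recurrence for `U` along
the anti-diagonal, `U_{m,n} = c_{m,n} U_{m-1,n+1} - g_{m,n}` with
`c_{m,n} = t_i f⁽ⁱ⁾_{m,n+1} / (t_j f⁽ʲ⁾_{m,n+1})`. Unrolling it `L` steps and using periodicity,
`U_{m,n} = P U_{m,n} - S` where `S` is the sum in the formula and `P` is the product of the
multipliers over one period; by the conservation law `P = (t_i/t_j)^L ≠ 1`, so `U_{m,n} = (P - 1)⁻¹ S`.
-/

open Finset

theorem affine_recurrence_head_eq {R : Type*} [CommRing R] {u c d : ℕ → R}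
    (h : ∀ k, u k = c k * u (k + 1) - d k) (k : ℕ) :
    u 0 = (∏ a ∈ range k, c a) * u k - ∑ b ∈ range k, d b * ∏ a ∈ range b, c a := by
  induction k with
  | zero => simp
  | succ k ih => rw [prod_range_succ, sum_range_succ, ih, h k]; ring

theorem affine_recurrence_head_eq_of_periodic {K : Type*} [Field K] {u c d : ℕ → K}
    (h : ∀ k, u k = c k * u (k + 1) - d k) {L : ℕ} (hper : u L = u 0)
    (hc : ∏ a ∈ range L, c a ≠ 1) :
    u 0 = (∏ a ∈ range L, c a - 1)⁻¹ * ∑ b ∈ range L, d b * ∏ a ∈ range b, c a := by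
  have hunrolled := affine_recurrence_head_eq h L
  rw [hper] at hunrolled
  rw [eq_inv_mul_iff_mul_eq₀ (sub_ne_zero.mpr hc)]
  linear_combination -hunrolled

theorem prod_range_antidiagonal_eq_one {M : Type*} [CommMonoid M] {f : ℤ → ℤ → M} {L : ℕ}
    (hcons : ∀ m n : ℤ, ∏ a ∈ range L, f (m + a) (n - a) = 1) (m n : ℤ) :
    ∏ a ∈ range L, f (m - a) (n + a + 1) = 1 := by
  rw [← hcons (m - (L - 1)) (n + L), ← prod_range_reflect]
  refine prod_congr rfl fun a ha => ?_
  have hcast : ((L - 1 - a : ℕ) : ℤ) = L - 1 - a := by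
    have := mem_range.mp ha
    omega
  rw [hcast]
  congr 1 <;> ring

theorem apply_sub_add_eq_of_periodic {α : Type*} {F : ℤ → ℤ → α} {L : ℤ}
    (hper1 : ∀ m n, F (m + L) n = F m n) (hper2 : ∀ m n, F m (n + L) = F m n) (m n : ℤ) :
    F (m - L) (n + L) = F m n := by
  rw [hper2, ← hper1, sub_add_cancel]

theorem eq_mul_sub_of_uv_equations {K : Type*} [Field K] {ti tj : K} (htj : tj ≠ 0)
    {g fi fj U V : ℤ → ℤ → K} (hfj : ∀ m n, fj m n ≠ 0)
    (heq1 : ∀ m n, V m n - U m n = g m n)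
    (heq2 : ∀ m n, ti * fi m n * U (m - 1) n = tj * fj m n * V m (n - 1)) (m n : ℤ) :
    U m n = ti * fi m (n + 1) / (tj * fj m (n + 1)) * U (m - 1) (n + 1) - g m n := by
  have hstep := heq2 m (n + 1)
  rw [add_sub_cancel_right] at hstep
  rw [div_mul_eq_mul_div, eq_sub_iff_add_eq, eq_div_iff (mul_ne_zero htj (hfj _ _))]
  linear_combination -hstep - tj * fj m (n + 1) * heq1 m n

theorem stmt_19_general (L : ℕ) (ti tj : ℂ) (htj : tj ≠ 0)
    (hx : (ti / tj) ^ L ≠ 1)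
    (g fi fj U V : ℤ → ℤ → ℂ)
    (hfj : ∀ m n, fj m n ≠ 0)
    (hperU1 : ∀ m n, U (m + L) n = U m n) (hperU2 : ∀ m n, U m (n + L) = U m n)
    (hconsi : ∀ m n : ℤ, ∏ a ∈ Finset.range L, fi (m + (a : ℤ)) (n - (a : ℤ)) = 1)
    (hconsj : ∀ m n : ℤ, ∏ a ∈ Finset.range L, fj (m + (a : ℤ)) (n - (a : ℤ)) = 1)
    (heq1 : ∀ m n, V m n - U m n = g m n)
    (heq2 : ∀ m n, ti * fi m n * U (m - 1) n = tj * fj m n * V m (n - 1)) :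
    ∀ m n : ℤ, U m n = ((ti / tj) ^ L - 1)⁻¹ *
      ∑ b ∈ Finset.range L, g (m - (b : ℤ)) (n + (b : ℤ)) *
        ∏ a ∈ Finset.range b, (ti * fi (m - (a : ℤ)) (n + (a : ℤ) + 1)) /
          (tj * fj (m - (a : ℤ)) (n + (a : ℤ) + 1)) := by
  intro m n
  have hrec : ∀ k : ℕ, U (m - k) (n + k) =
      ti * fi (m - k) (n + k + 1) / (tj * fj (m - k) (n + k + 1)) *
        U (m - (k + 1 : ℕ)) (n + (k + 1 : ℕ)) - g (m - k) (n + k) := by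
    intro k
    rw [eq_mul_sub_of_uv_equations htj hfj heq1 heq2]
    push_cast
    ring_nf
  have hprod : ∏ a ∈ range L, ti * fi (m - a) (n + a + 1) / (tj * fj (m - a) (n + a + 1)) =
      (ti / tj) ^ L := by
    rw [prod_div_distrib, prod_mul_distrib, prod_mul_distrib, prod_const, prod_const,
      prod_range_antidiagonal_eq_one hconsi, prod_range_antidiagonal_eq_one hconsj,
      card_range, mul_one, mul_one, div_pow]
  have hper : U (m - L) (n + L) = U m n := apply_sub_add_eq_of_periodic hperU1 hperU2 m n
  have hsolved := affine_recurrence_head_eq_of_periodic (u := fun k : ℕ => U (m - k) (n + k))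
    hrec (by simpa using hper) (hprod ▸ hx)
  rw [hprod] at hsolved
  simpa only [Nat.cast_zero, sub_zero, add_zero] using hsolved

/-- solving equations (uv_fg_1)–(uv_fg_2) of Section 4.  Suppose
`V_{m,n} − U_{m,n} = g_{m,n}` and `t_i f⁽ⁱ⁾_{m,n} U_{m−1,n} = t_j f⁽ʲ⁾_{m,n} V_{m,n−1}`,
with all of `U, V, g, f⁽ⁱ⁾, f⁽ʲ⁾` being `(L,L)`-periodic, `f⁽ⁱ⁾, f⁽ʲ⁾` nonvanishing and
satisfying the conservation law (their product over any `L` consecutive anti-diagonal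
points is `1`, as holds in the paper), and `(t_i/t_j)^L ≠ 1`.  Then `U` is uniquely
determined by the stated closed formula
`U_{m,n} = ((t_i/t_j)^L − 1)⁻¹ Σ_{b=1}^L g_{m−b+1,n+b−1}
  Π_{a=1}^{b−1} (t_i f⁽ⁱ⁾_{m−a+1,n+a})/(t_j f⁽ʲ⁾_{m−a+1,n+a})`. -/
theorem stmt_19 (L : ℕ) (hL : 2 ≤ L) (ti tj : ℂ) (hti : ti ≠ 0) (htj : tj ≠ 0)
    (hx : (ti / tj) ^ L ≠ 1)
    (g fi fj U V : ℤ → ℤ → ℂ)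
    (hfi : ∀ m n, fi m n ≠ 0) (hfj : ∀ m n, fj m n ≠ 0)
    (hperU1 : ∀ m n, U (m + L) n = U m n) (hperU2 : ∀ m n, U m (n + L) = U m n)
    (hperV1 : ∀ m n, V (m + L) n = V m n) (hperV2 : ∀ m n, V m (n + L) = V m n)
    (hperg1 : ∀ m n, g (m + L) n = g m n) (hperg2 : ∀ m n, g m (n + L) = g m n)
    (hperfi1 : ∀ m n, fi (m + L) n = fi m n) (hperfi2 : ∀ m n, fi m (n + L) = fi m n)
    (hperfj1 : ∀ m n, fj (m + L) n = fj m n) (hperfj2 : ∀ m n, fj m (n + L) = fj m n)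
    (hconsi : ∀ m n : ℤ, ∏ a ∈ Finset.range L, fi (m + (a : ℤ)) (n - (a : ℤ)) = 1)
    (hconsj : ∀ m n : ℤ, ∏ a ∈ Finset.range L, fj (m + (a : ℤ)) (n - (a : ℤ)) = 1)
    (heq1 : ∀ m n, V m n - U m n = g m n)
    (heq2 : ∀ m n, ti * fi m n * U (m - 1) n = tj * fj m n * V m (n - 1)) :
    ∀ m n : ℤ, U m n = ((ti / tj) ^ L - 1)⁻¹ *
      ∑ b ∈ Finset.range L, g (m - (b : ℤ)) (n + (b : ℤ)) *
        ∏ a ∈ Finset.range b, (ti * fi (m - (a : ℤ)) (n + (a : ℤ) + 1)) /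
          (tj * fj (m - (a : ℤ)) (n + (a : ℤ) + 1)) :=
  stmt_19_general L ti tj htj hx g fi fj U V hfj hperU1 hperU2 hconsi hconsj heq1 heq2
end
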